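/- Let H be a proper subgroup of a finite group G, V an F H-module (char F ∤ |G|), and W = Ind_H^G V with S(V) regarded as a subalgebra of S(W). Then (S(W)_+^G S(W)) ∩ S(V) ⊆ S(V)_+^H S(V)_+, i.e., any element of the Hilbert ideal of S(W) lying in S(V) is a sum of products of a positive-degree H-invariant of S(V) with a positive-degree element of S(V). -/

import Mathlib

noncomputable section
open MvPolynomial

variable {F : Type} [Field F]

/-- The algebra homomorphism between polynomial algebras (viewed as symmetric algebras)
induced by a linear map between the spaces of variables (the degree one components). -/
noncomputable def algOf {α β : Type} [Fintype α] [Fintype β] [DecidableEq α]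
    (f : (α → F) →ₗ[F] (β → F)) :
    MvPolynomial α F →ₐ[F] MvPolynomial β F :=
  aeval fun j => ∑ i, f (Pi.single j 1) i • X i

/-- The embedding of the space of linear forms into the polynomial algebra. -/
noncomputable def lin {β : Type} [Fintype β] (w : β → F) : MvPolynomial β F :=
  ∑ i, w i • X i

/-- The subalgebra of `G`-invariants of the symmetric algebra of a representation. -/
def invariants {G : Type} [Group G] {α : Type} [Fintype α] [DecidableEq α]
    (ρ : Representation F G (α → F)) : Subalgebra F (MvPolynomial α F) where
  carrier := {p | ∀ g : G, algOf (ρ g) p = p}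
  mul_mem' := fun ha hb g => by rw [map_mul, ha g, hb g]
  add_mem' := fun ha hb g => by rw [map_add, ha g, hb g]
  algebraMap_mem' := fun r g => (algOf (ρ g)).commutes r

variable {G : Type} [Group G] {α : Type} [Fintype α] [DecidableEq α]

/-- The invariant ring is generated as an `F`-algebra in degrees at most `d`. -/
def genLE (ρ : Representation F G (α → F)) (d : ℕ) : Prop :=
  Algebra.adjoin F {p : MvPolynomial α F | p ∈ invariants ρ ∧ p.totalDegree ≤ d}
    = invariants ρ

/-- The Noether number `β(G,W)` of a representation. -/
def noether (ρ : Representation F G (α → F)) : ℕ := sInf {d | genLE ρ d}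

/-- The Hilbert ideal: the ideal of `S(W)` generated by the invariants of positive degree. -/
def hilbertIdeal (ρ : Representation F G (α → F)) : Ideal (MvPolynomial α F) :=
  Ideal.span {p | p ∈ invariants ρ ∧ constantCoeff p = 0}

/-- `b(G,W)`: the top degree of the algebra of coinvariants `S(W)/S(W)₊^G S(W)`. -/
def coinvTop (ρ : Representation F G (α → F)) : ℕ :=
  sSup {d | ∃ p : MvPolynomial α F, p.IsHomogeneous d ∧ p ∉ hilbertIdeal ρ}

/-- `b_k(G,W)`: the top degree of `S(W)/((S(W)₊^G)^k S(W))`. -/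
def coinvTopK (ρ : Representation F G (α → F)) (k : ℕ) : ℕ :=
  sSup {d | ∃ p : MvPolynomial α F, p.IsHomogeneous d ∧ p ∉ (hilbertIdeal ρ) ^ k}

/-- The span of all products of `k` positive-degree invariants,
i.e. `(S(W)₊^G)^k` computed inside the invariant ring. -/
def prodPow (ρ : Representation F G (α → F)) (k : ℕ) : Submodule F (MvPolynomial α F) :=
  Submodule.span F {x | ∃ f : Fin k → MvPolynomial α F,
    (∀ i, f i ∈ invariants ρ ∧ constantCoeff (f i) = 0) ∧ x = ∏ i, f i}

/-- The `k`-th Noether number `β_k(G,W)`, the top degree of `S(W)^G/(S(W)₊^G)^{k+1}`. -/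
def noetherK (ρ : Representation F G (α → F)) (k : ℕ) : ℕ :=
  sSup {d | ∃ p, p ∈ invariants ρ ∧ p.IsHomogeneous d ∧ p ∉ prodPow ρ (k+1)}

/-- `β(G)`: the supremum of the Noether numbers over all finite dimensional modules. -/
def noetherSup (F G : Type) [Field F] [Group G] : ℕ∞ :=
  ⨆ (n : ℕ) (ρ : Representation F G (Fin n → F)), (noether ρ : ℕ∞)

/-- `b(G)`: the supremum of `b(G,W)` over all finite dimensional modules. -/
def coinvSup (F G : Type) [Field F] [Group G] : ℕ∞ :=
  ⨆ (n : ℕ) (ρ : Representation F G (Fin n → F)), (coinvTop ρ : ℕ∞)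

/-- `β_k(G)`: the supremum of the `k`-th Noether numbers over all modules. -/
def noetherKSup (F G : Type) [Field F] [Group G] (k : ℕ) : ℕ∞ :=
  ⨆ (n : ℕ) (ρ : Representation F G (Fin n → F)), (noetherK ρ k : ℕ∞)

/-!
Let `θ : W → V` be the projection onto the summand `V = 1·V` along the summands `c·V`, `c ≠ 1`.
As `H` permutes the summands `g·V` with `g ∉ H`, `θ` is `H`-equivariant, so it maps `S(W)^G`
into `S(V)^H`. For `g ∉ H`, the map `θ' = θ ∘ g⁻¹` agrees with `θ` on `S(W)^G` but kills `V`.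
Hence for `f = Σ rᵢ sᵢ` in the Hilbert ideal,
`θ(f) - θ'(f) = Σ θ(sᵢ) (θ(rᵢ) - θ'(rᵢ)) ∈ S(V)₊^H S(V)₊`, and for `f ∈ S(V)` this is `f - 0`.
-/

section Functoriality

variable {β γ : Type} [Fintype β] [Fintype γ]

theorem algOf_X (f : (α → F) →ₗ[F] (β → F)) (j : α) :
    algOf f (X j) = lin (f (Pi.single j 1)) :=
  aeval_X _ _

theorem algOf_lin (f : (α → F) →ₗ[F] (β → F)) (w : α → F) :
    algOf f (lin w) = lin (f w) := by
  conv_rhs => rw [pi_eq_sum_univ' w]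
  simp only [lin, map_sum, map_smul, algOf_X, Finset.smul_sum, smul_smul, Finset.sum_apply,
    Pi.smul_apply, smul_eq_mul, Finset.sum_smul]
  exact Finset.sum_comm

theorem algOf_comp [DecidableEq β] (f : (α → F) →ₗ[F] (β → F)) (g : (β → F) →ₗ[F] (γ → F))
    (p : MvPolynomial α F) : algOf (g ∘ₗ f) p = algOf g (algOf f p) := by
  suffices algOf (g ∘ₗ f) = (algOf g).comp (algOf f) from DFunLike.congr_fun this p
  refine algHom_ext fun j => ?_
  rw [AlgHom.comp_apply, algOf_X, algOf_X, algOf_lin, LinearMap.comp_apply]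

theorem algOf_id (p : MvPolynomial α F) : algOf LinearMap.id p = p := by
  induction p using MvPolynomial.induction_on <;> simp_all [algOf_X, lin]

theorem algOf_zero (p : MvPolynomial α F) :
    algOf (0 : (α → F) →ₗ[F] (β → F)) p = C (constantCoeff p) := by
  induction p using MvPolynomial.induction_on <;> simp_all [algOf_X, lin]

theorem constantCoeff_algOf (f : (α → F) →ₗ[F] (β → F)) (p : MvPolynomial α F) :
    constantCoeff (algOf f p) = constantCoeff p := by
  induction p using MvPolynomial.induction_on <;> simp_all [algOf_X, lin]

end Functoriality

theorem constantCoeff_eq_zero_of_mem_hilbertIdeal {ρ : Representation F G (α → F)}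
    {p : MvPolynomial α F} (hp : p ∈ hilbertIdeal ρ) : constantCoeff p = 0 :=
  (Ideal.span_le (I := RingHom.ker constantCoeff)).mpr (fun _ hq => hq.2) hp

section Invariants

variable {H : Type} [Group H] {β : Type} [Fintype β]
  {σ : Representation F G (α → F)} {ρ : Representation F H (β → F)}

/-- `S(V)₊^H S(V)₊`. -/
def posInvariantsMulPos [DecidableEq β] (ρ : Representation F H (β → F)) :
    Submodule F (MvPolynomial β F) :=
  Submodule.span F {x | ∃ a b : MvPolynomial β F,
    a ∈ invariants ρ ∧ constantCoeff a = 0 ∧ constantCoeff b = 0 ∧ x = a * b}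

theorem algOf_comp_of_mem_invariants {s : MvPolynomial α F} (hs : s ∈ invariants σ)
    (θ : (α → F) →ₗ[F] (β → F)) (g : G) : algOf (θ ∘ₗ σ g) s = algOf θ s := by
  rw [algOf_comp, hs g]

theorem algOf_mem_invariants [DecidableEq β] (φ : H →* G) {θ : (α → F) →ₗ[F] (β → F)}
    (hθ : ∀ h, θ ∘ₗ σ (φ h) = ρ h ∘ₗ θ) {s : MvPolynomial α F} (hs : s ∈ invariants σ) :
    algOf θ s ∈ invariants ρ := fun h => by
  rw [← algOf_comp, ← hθ, algOf_comp_of_mem_invariants hs]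

theorem algOf_sub_algOf_mem_posInvariantsMulPos [DecidableEq β] {θ θ' : (α → F) →ₗ[F] (β → F)}
    (hinv : ∀ s ∈ invariants σ, algOf θ s ∈ invariants ρ)
    (heq : ∀ s ∈ invariants σ, algOf θ' s = algOf θ s)
    {f : MvPolynomial α F} (hf : f ∈ hilbertIdeal σ) :
    algOf θ f - algOf θ' f ∈ posInvariantsMulPos ρ := by
  suffices ∀ r, algOf θ (r * f) - algOf θ' (r * f) ∈ posInvariantsMulPos ρ by
    simpa using this 1
  induction hf using Submodule.span_induction with
  | mem s hs =>
    intro r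
    obtain ⟨hs, hs₀⟩ := hs
    have hfactor : algOf θ (r * s) - algOf θ' (r * s)
        = algOf θ s * (algOf θ r - algOf θ' r) := by
      rw [map_mul, map_mul, heq s hs]; ring
    rw [hfactor]
    refine Submodule.subset_span ⟨_, _, hinv s hs, ?_, ?_, rfl⟩
    · rwa [constantCoeff_algOf]
    · rw [map_sub, constantCoeff_algOf, constantCoeff_algOf, sub_self]
  | zero => simp
  | add x y _ _ hx hy =>
    intro r
    rw [mul_add, map_add, map_add, add_sub_add_comm]
    exact add_mem (hx r) (hy r)
  | smul a x _ hx =>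
    intro r
    rw [smul_eq_mul, ← mul_assoc]
    exact hx (r * a)

end Invariants

theorem iSupIndep.isCompl_iSup_ne {κ L : Type*} [CompleteLattice L] {M : κ → L}
    (hind : iSupIndep M) (htop : ⨆ i, M i = ⊤) (i : κ) : IsCompl (M i) (⨆ (j) (_ : j ≠ i), M j) :=
  ⟨hind i, codisjoint_iff.mpr (iSup_split_single M i ▸ htop)⟩

theorem LinearMap.exists_leftInverse_le_ker {R M N : Type*} [Ring R] [AddCommGroup M]
    [AddCommGroup N] [Module R M] [Module R N] {ι : M →ₗ[R] N} (hι : Function.Injective ι)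
    {U : Submodule R N} (h : IsCompl (LinearMap.range ι) U) :
    ∃ θ : N →ₗ[R] M, θ ∘ₗ ι = LinearMap.id ∧ U ≤ LinearMap.ker θ := by
  refine ⟨LinearMap.ofIsCompl h (LinearEquiv.ofInjective ι hι).symm.toLinearMap 0,
    LinearMap.ext fun v => ?_, fun u hu => ?_⟩
  · simpa using LinearMap.ofIsCompl_apply_left h
      (φ := (LinearEquiv.ofInjective ι hι).symm.toLinearMap) (ψ := (0 : U →ₗ[R] M))
      (LinearEquiv.ofInjective ι hι v)
  · simp [LinearMap.ofIsCompl_apply_right h (ψ := (0 : U →ₗ[R] M)) ⟨u, hu⟩]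

section Induced

variable {H : Subgroup G} {V W : Type} [AddCommGroup V] [Module F V] [AddCommGroup W] [Module F W]
  {ρ : Representation F H V} {σ : Representation F G W} {ι : V →ₗ[F] W}
  {θ : W →ₗ[F] V} {C : Set G}

theorem exists_leftInverse_of_isInduced (hι : Function.Injective ι)
    (hequiv : ∀ h : H, σ h ∘ₗ ι = ι ∘ₗ ρ h)
    (hC : Subgroup.IsComplement C (H : Set G)) (h1 : (1 : G) ∈ C)
    (hindep : iSupIndep fun c : C => (LinearMap.range ι).map (σ c.1))
    (hspan : ⨆ c : C, (LinearMap.range ι).map (σ c.1) = ⊤) :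
    ∃ θ : W →ₗ[F] V, θ ∘ₗ ι = LinearMap.id ∧ ∀ g ∉ H, θ ∘ₗ σ g ∘ₗ ι = 0 := by
  set M := fun c : C => (LinearMap.range ι).map (σ c.1)
  have hM1 : M ⟨1, h1⟩ = LinearMap.range ι := by simp [M, Module.End.one_eq_id]
  obtain ⟨θ, hθι, hθker⟩ := LinearMap.exists_leftInverse_le_ker hι
    (hM1 ▸ hindep.isCompl_iSup_ne hspan ⟨1, h1⟩)
  refine ⟨θ, hθι, fun g hg => LinearMap.ext fun v => ?_⟩
  obtain ⟨⟨c, h⟩, rfl⟩ := hC.2 g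
  have hc : c ≠ ⟨1, h1⟩ := fun hc => hg (by simp [hc])
  have hmem : σ (c * h) (ι v) ∈ M c := by
    rw [map_mul, Module.End.mul_apply,
      show σ h.1 (ι v) = ι (ρ ⟨h, h.2⟩ v) from LinearMap.congr_fun (hequiv ⟨h, h.2⟩) v]
    exact Submodule.mem_map_of_mem (LinearMap.mem_range_self ι _)
  exact hθker (le_biSup M hc hmem)

theorem leftInverse_apply_of_mem (hθι : θ ∘ₗ ι = LinearMap.id)
    (hequiv : ∀ h : H, σ h ∘ₗ ι = ι ∘ₗ ρ h) {g : G} (hg : g ∈ H) (v : V) :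
    θ (σ g (ι v)) = ρ ⟨g, hg⟩ v := by
  rw [← LinearMap.comp_apply (σ g), hequiv ⟨g, hg⟩, ← LinearMap.comp_apply θ,
    ← LinearMap.comp_assoc, hθι, LinearMap.id_comp]

theorem leftInverse_comp_eq_comp (hθι : θ ∘ₗ ι = LinearMap.id)
    (hθ : ∀ g ∉ H, θ ∘ₗ σ g ∘ₗ ι = 0) (hequiv : ∀ h : H, σ h ∘ₗ ι = ι ∘ₗ ρ h)
    (hspan : ⨆ c : C, (LinearMap.range ι).map (σ c.1) = ⊤) (h : H) :
    θ ∘ₗ σ h = ρ h ∘ₗ θ := by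
  suffices ⊤ ≤ LinearMap.ker (θ ∘ₗ σ h - ρ h ∘ₗ θ) from
    sub_eq_zero.mp (LinearMap.ker_eq_top.mp (top_le_iff.mp this))
  rw [← hspan]
  refine iSup_le fun c => ?_
  rintro _ ⟨_, ⟨v, rfl⟩, rfl⟩
  rw [LinearMap.mem_ker, LinearMap.sub_apply, LinearMap.comp_apply, LinearMap.comp_apply,
    sub_eq_zero, ← Module.End.mul_apply, ← map_mul]
  by_cases hc : c.1 ∈ H
  · rw [leftInverse_apply_of_mem hθι hequiv (H.mul_mem h.2 hc),
      leftInverse_apply_of_mem hθι hequiv hc, ← Module.End.mul_apply, ← map_mul]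
    rfl
  · have hhc : h * c.1 ∉ H := fun hhc => hc (by simpa using H.mul_mem (H.inv_mem h.2) hhc)
    have hvanish := fun g hg => LinearMap.congr_fun (hθ g hg) v
    simp only [LinearMap.comp_apply, LinearMap.zero_apply] at hvanish
    rw [hvanish _ hhc, hvanish _ hc, map_zero]

end Induced

theorem stmt9_general
    {G : Type} [Group G]
    (H : Subgroup G) {nV m : ℕ}
    (ρ : Representation F H (Fin nV → F))
    (σ : Representation F G (Fin m → F))
    (ι : (Fin nV → F) →ₗ[F] (Fin m → F)) (hι : Function.Injective ι)
    (hequiv : ∀ h : H, σ h ∘ₗ ι = ι ∘ₗ ρ h)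
    (C : Set G) (hC : Subgroup.IsComplement C (H : Set G)) (h1 : (1:G) ∈ C)
    (hindep : iSupIndep fun c : C => (LinearMap.range ι).map (σ c.1))
    (hspan : ⨆ c : C, (LinearMap.range ι).map (σ c.1) = ⊤)
    (hHG : H ≠ ⊤) :
    ∀ q : MvPolynomial (Fin nV) F, algOf ι q ∈ hilbertIdeal σ →
      q ∈ Submodule.span F {x | ∃ a b : MvPolynomial (Fin nV) F,
        a ∈ invariants ρ ∧ MvPolynomial.constantCoeff a = 0 ∧
        MvPolynomial.constantCoeff b = 0 ∧ x = a * b} := by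
  intro q hq
  obtain ⟨θ, hθι, hθ⟩ := exists_leftInverse_of_isInduced hι hequiv hC h1 hindep hspan
  obtain ⟨g₀, hg₀⟩ : ∃ g, g ∉ H := by simpa [Subgroup.eq_top_iff'] using hHG
  have hq₀ : constantCoeff q = 0 := by
    rw [← constantCoeff_algOf ι]; exact constantCoeff_eq_zero_of_mem_hilbertIdeal hq
  have key := algOf_sub_algOf_mem_posInvariantsMulPos (θ' := θ ∘ₗ σ g₀⁻¹)
    (fun s hs => algOf_mem_invariants H.subtype (leftInverse_comp_eq_comp hθι hθ hequiv hspan) hs)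
    (fun s hs => algOf_comp_of_mem_invariants hs θ g₀⁻¹) hq
  rwa [← algOf_comp, ← algOf_comp, hθι, algOf_id, LinearMap.comp_assoc, hθ g₀⁻¹ (by simpa),
    algOf_zero, hq₀, map_zero, sub_zero] at key

/-- the intersection of the Hilbert ideal of `S(W)` with `S(V)` is
contained in `S(V)₊^H S(V)₊`. -/
theorem stmt9
    {G : Type} [Group G] [Fintype G]
    (hchar : (Fintype.card G : F) ≠ 0)
    (H : Subgroup G) {nV m : ℕ}
    (ρ : Representation F H (Fin nV → F))
    (σ : Representation F G (Fin m → F))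
    (ι : (Fin nV → F) →ₗ[F] (Fin m → F)) (hι : Function.Injective ι)
    (hequiv : ∀ h : H, σ h ∘ₗ ι = ι ∘ₗ ρ h)
    (C : Set G) (hC : Subgroup.IsComplement C (H : Set G)) (h1 : (1:G) ∈ C)
    (hindep : iSupIndep fun c : C => (LinearMap.range ι).map (σ c.1))
    (hspan : ⨆ c : C, (LinearMap.range ι).map (σ c.1) = ⊤)
    (hHG : H ≠ ⊤) :
    ∀ q : MvPolynomial (Fin nV) F, algOf ι q ∈ hilbertIdeal σ →
      q ∈ Submodule.span F {x | ∃ a b : MvPolynomial (Fin nV) F,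
        a ∈ invariants ρ ∧ MvPolynomial.constantCoeff a = 0 ∧
        MvPolynomial.constantCoeff b = 0 ∧ x = a * b} :=
  stmt9_general H ρ σ ι hι hequiv C hC h1 hindep hspan hHG

end
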